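/- arXiv:1011.5830 — 2 statements merged into one kernel-verified Lean document; each statement's English description precedes it below -/
import Mathlib

section
/- ('If' direction of the generalized Abel criterion, algebraic core): Suppose a function φ satisfies the quadratic equation ε b P_{s−1} φ² + (P_s + ε b Q_{s−1}) φ + Q_s = 0 with the Wronskian identity ε b(Q_s P_{s−1} − Q_{s−1} P_s) = 1, and suppose φ = (√R − U)/V where P_{s−1} = P̃_{s−1}·V for some polynomial P̃_{s−1}. Then X := ε b (P̃_{s−1}U − Q_{s−1}) and Y := ε b P̃_{s−1} satisfy X² − R·Y² = 1. -/
open Polynomial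

/-- 'If' direction of the generalized Abel criterion (algebraic core):
`X := ε b (P̃_{s−1} U − Q_{s−1})` and `Y := ε b P̃_{s−1}` solve the Pell–Abel equation. -/
theorem abel_criterion_pell (Ps1 Pt Ps Qs1 Qs R U V : Polynomial ℝ) (ε b : ℝ)
    (hε : ε = 1 ∨ ε = -1) (hb : 0 < b) (hV : V ≠ 0)
    (hW : C (ε * b) * (Qs * Ps1 - Qs1 * Ps) = 1)
    (hfac : Ps1 = Pt * V)
    (h3 : Ps * V = 2 * C (ε * b) * Ps1 * U - C (ε * b) * Qs1 * V)
    (h4 : Qs * V ^ 2 = C (ε * b) * Ps1 * (U ^ 2 - R)) :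
    (C (ε * b) * (Pt * U - Qs1)) ^ 2 - R * (C (ε * b) * Pt) ^ 2 = 1 := by
  subst hfac
  have key : ((C (ε * b) * (Pt * U - Qs1)) ^ 2 - R * (C (ε * b) * Pt) ^ 2) * V ^ 2
      = 1 * V ^ 2 := by
    linear_combination (V ^ 2) * hW - (C (ε * b) * Pt * V) * h4 + (C (ε * b) * Qs1 * V) * h3
  exact mul_right_cancel₀ (pow_ne_zero 2 hV) key
end

section
/- If T = W_0·W_1···W_{s−1} is a product of matrices W_j(λ) = [[0, −ε_j/b_j], [ε_j b_j, p_j(λ)/b_j]] (ε_j = ±1, b_j > 0, p_j monic real polynomials of degree k_j ≥ 1), then the (2,2) entry of T is a polynomial of degree k_0 + k_1 + ⋯ + k_{s−1} with positive leading coefficient, and the (1,2) and (2,1) entries have strictly smaller degree. -/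
open Polynomial Matrix Finset

def Good (M : Matrix (Fin 2) (Fin 2) (Polynomial ℝ)) : Prop :=
  M 0 0 = 0 ∧ (∃ c : ℝ, c ≠ 0 ∧ M 0 1 = C c) ∧ (∃ d : ℝ, M 1 0 = C d) ∧
    1 ≤ (M 1 1).natDegree ∧ 0 < (M 1 1).leadingCoeff

lemma aux (L : List (Matrix (Fin 2) (Fin 2) (Polynomial ℝ))) (hL : L ≠ [])
    (h : ∀ M ∈ L, Good M) :
    (L.prod 1 1).natDegree = (L.map (fun M => (M 1 1).natDegree)).sum ∧
    (L.prod 1 1).leadingCoeff = (L.map (fun M => (M 1 1).leadingCoeff)).prod ∧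
    (L.prod 0 0).degree < (L.prod 1 1).degree ∧
    (L.prod 0 1).degree < (L.prod 1 1).degree ∧
    (L.prod 1 0).degree < (L.prod 1 1).degree := by
  induction L with
  | nil => exact absurd rfl hL
  | cons M L ih =>
    obtain ⟨hM00, ⟨c, hc, hM01⟩, ⟨d, hM10⟩, hMdeg, hMlead⟩ := h M List.mem_cons_self
    have hM11ne : M 1 1 ≠ 0 := fun hz => by simp [hz] at hMlead
    have hMdegpos : 0 < (M 1 1).degree := natDegree_pos_iff_degree_pos.mp hMdeg
    rcases eq_or_ne L [] with rfl | hLne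
    · have hprod : (M :: ([] : List (Matrix (Fin 2) (Fin 2) (Polynomial ℝ)))).prod = M := by
        simp
      rw [hprod]
      refine ⟨by simp, by simp, ?_, ?_, ?_⟩
      · rw [hM00]; simpa using hMdegpos.trans_le' bot_le |> fun _ => lt_of_le_of_lt (by simp) hMdegpos
      · rw [hM01]; exact lt_of_le_of_lt degree_C_le hMdegpos
      · rw [hM10]; exact lt_of_le_of_lt degree_C_le hMdegpos
    · obtain ⟨ih1, ih2, ih3, ih4, ih5⟩ := ih hLne (fun N hN => h N (List.mem_cons_of_mem M hN))
      set T := L.prod with hTdef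
      have hT11ne : (T 1 1) ≠ 0 := by
        intro hz
        have : (0:ℝ) < (T 1 1).leadingCoeff := by
          rw [ih2]
          exact List.prod_pos (by
            intro x hx
            simp only [List.mem_map] at hx
            obtain ⟨N, hN, rfl⟩ := hx
            exact (h N (List.mem_cons_of_mem M hN)).2.2.2.2)
        simp [hz] at this
      have hT11lead : 0 < (T 1 1).leadingCoeff := by
        rw [ih2]
        exact List.prod_pos (by
          intro x hx
          simp only [List.mem_map] at hx
          obtain ⟨N, hN, rfl⟩ := hx
          exact (h N (List.mem_cons_of_mem M hN)).2.2.2.2)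
      -- entries of product
      have hmul : ∀ i j, ((M :: L).prod) i j = M i 0 * T 0 j + M i 1 * T 1 j := by
        intro i j
        rw [List.prod_cons, Matrix.mul_apply, Fin.sum_univ_two]
      have hMdegnb : (M 1 1).degree ≠ ⊥ := degree_ne_bot.mpr hM11ne
      have hle : (T 1 1).degree ≤ (M 1 1).degree + (T 1 1).degree :=
        le_add_of_nonneg_left hMdegpos.le
      -- the main entry: f + g with f small
      have hfg : degree (M 1 0 * T 0 1) < degree (M 1 1 * T 1 1) := by
        calc degree (M 1 0 * T 0 1) ≤ degree (T 0 1) := by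
              rw [hM10]
              calc degree (C d * T 0 1) ≤ degree (C d) + degree (T 0 1) := degree_mul_le _ _
                _ ≤ 0 + degree (T 0 1) := add_le_add_left degree_C_le _
                _ = degree (T 0 1) := zero_add _
          _ < degree (T 1 1) := ih4
          _ ≤ degree (M 1 1 * T 1 1) := by rw [degree_mul]; exact hle
      have hdeg11 : degree ((M :: L).prod 1 1) = degree (M 1 1) + degree (T 1 1) := by
        rw [hmul 1 1, degree_add_eq_right_of_degree_lt hfg, degree_mul]
      have hlead11 : ((M :: L).prod 1 1).leadingCoeff = (M 1 1).leadingCoeff * (T 1 1).leadingCoeff := by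
        rw [hmul 1 1, leadingCoeff_add_of_degree_lt hfg, leadingCoeff_mul]
      have hnd11 : ((M :: L).prod 1 1).natDegree = (M 1 1).natDegree + (T 1 1).natDegree := by
        have := natDegree_eq_of_degree_eq (q := M 1 1 * T 1 1) (by rw [hdeg11, degree_mul])
        rw [this, natDegree_mul hM11ne hT11ne]
      refine ⟨?_, ?_, ?_, ?_, ?_⟩
      · rw [hnd11, List.map_cons, List.sum_cons, ih1]
      · rw [hlead11, List.map_cons, List.prod_cons, ih2]
      · -- 0 0 entry
        rw [hmul 0 0, hM00, hM01, zero_mul, zero_add, hdeg11]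
        calc degree (C c * T 1 0) ≤ degree (T 1 0) := by
              calc degree (C c * T 1 0) ≤ degree (C c) + degree (T 1 0) := degree_mul_le _ _
                _ ≤ 0 + degree (T 1 0) := add_le_add_left degree_C_le _
                _ = degree (T 1 0) := zero_add _
          _ < degree (T 1 1) := ih5
          _ ≤ _ := hle
      · -- 0 1 entry
        rw [hmul 0 1, hM00, hM01, zero_mul, zero_add, hdeg11, degree_C_mul hc]
        calc degree (T 1 1) = 0 + degree (T 1 1) := (zero_add _).symm
          _ < degree (M 1 1) + degree (T 1 1) := by
              apply WithBot.add_lt_add_right (degree_ne_bot.mpr hT11ne) hMdegpos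
      · -- 1 0 entry
        rw [hmul 1 0, hdeg11]
        apply lt_of_le_of_lt (degree_add_le _ _)
        rw [max_lt_iff]
        constructor
        · rw [hM10]
          calc degree (C d * T 0 0) ≤ degree (C d) + degree (T 0 0) := degree_mul_le _ _
            _ ≤ 0 + degree (T 0 0) := add_le_add_left degree_C_le _
            _ = degree (T 0 0) := zero_add _
            _ < degree (T 1 1) := ih3
            _ ≤ _ := hle
        · rw [degree_mul]
          exact WithBot.add_lt_add_left hMdegnb ih5


/-- Degree structure of the monodromy matrix `T = W_0 W_1 ⋯ W_{s−1}`: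
the `(2,2)` entry has degree `k_0 + ⋯ + k_{s−1}` and positive leading coefficient
`(b_0 ⋯ b_{s−1})⁻¹`, while the `(1,2)` and `(2,1)` entries have strictly smaller degree. -/
theorem monodromy_degrees (s : ℕ) (hs : 1 ≤ s) (ε b : Fin s → ℝ) (p : Fin s → Polynomial ℝ)
    (k : Fin s → ℕ)
    (hε : ∀ j, ε j = 1 ∨ ε j = -1) (hb : ∀ j, 0 < b j)
    (hp : ∀ j, (p j).Monic) (hk : ∀ j, (p j).natDegree = k j) (hk1 : ∀ j, 1 ≤ k j)
    (W : Fin s → Matrix (Fin 2) (Fin 2) (Polynomial ℝ))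
    (hW : ∀ j, W j = !![0, C (-(ε j) / b j); C ((ε j) * b j), C (b j)⁻¹ * p j])
    (T : Matrix (Fin 2) (Fin 2) (Polynomial ℝ)) (hT : T = (List.ofFn W).prod) :
    (T 1 1).natDegree = ∑ j, k j ∧
      (T 1 1).leadingCoeff = (∏ j, b j)⁻¹ ∧ 0 < (T 1 1).leadingCoeff ∧
      (T 0 1).degree < (T 1 1).degree ∧ (T 1 0).degree < (T 1 1).degree := by
  have hεne : ∀ j, ε j ≠ 0 := by
    intro j; rcases hε j with h | h <;> rw [h] <;> norm_num
  have hbne : ∀ j, b j ≠ 0 := fun j => (hb j).ne'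
  have hW11nd : ∀ j, ((W j) 1 1).natDegree = k j := by
    intro j
    rw [hW j]
    show (C (b j)⁻¹ * p j).natDegree = k j
    rw [natDegree_C_mul (inv_ne_zero (hbne j)), hk j]
  have hW11lead : ∀ j, ((W j) 1 1).leadingCoeff = (b j)⁻¹ := by
    intro j
    rw [hW j]
    show (C (b j)⁻¹ * p j).leadingCoeff = (b j)⁻¹
    rw [leadingCoeff_mul, leadingCoeff_C, (hp j).leadingCoeff, mul_one]
  have hgood : ∀ M ∈ List.ofFn W, Good M := by
    intro M hM
    rw [List.mem_ofFn] at hM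
    obtain ⟨j, rfl⟩ := hM
    refine ⟨by rw [hW j]; simp, ⟨-(ε j) / b j, ?_, by rw [hW j]; simp⟩,
      ⟨ε j * b j, by rw [hW j]; simp⟩, ?_, ?_⟩
    · exact div_ne_zero (neg_ne_zero.mpr (hεne j)) (hbne j)
    · rw [hW11nd j]; exact hk1 j
    · rw [hW11lead j]; exact inv_pos.mpr (hb j)
  have hLne : List.ofFn W ≠ [] := by
    intro h
    have := congrArg List.length h
    simp at this
    omega
  obtain ⟨h1, h2, h3, h4, h5⟩ := aux (List.ofFn W) hLne hgood
  rw [hT]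
  have e1 : ((List.ofFn W).map (fun M => (M 1 1).natDegree)).sum = ∑ j, k j := by
    rw [List.map_ofFn, List.sum_ofFn]
    simp only [Function.comp]
    exact Finset.sum_congr rfl (fun j _ => hW11nd j)
  have e2 : ((List.ofFn W).map (fun M => (M 1 1).leadingCoeff)).prod = (∏ j, b j)⁻¹ := by
    rw [List.map_ofFn, List.prod_ofFn]
    simp only [Function.comp]
    rw [← Finset.prod_inv_distrib]
    exact Finset.prod_congr rfl (fun j _ => hW11lead j)
  refine ⟨by rw [h1, e1], by rw [h2, e2], ?_, h4, h5⟩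
  rw [h2, e2]
  exact inv_pos.mpr (Finset.prod_pos (fun j _ => hb j))
end
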